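/- F_N has constant term 1 and is hence invertible in R⟦q⟧; for every j ≥ 0 and every N ≥ j, the coefficient of q^j in F_N^{−1} is a polynomial of degree at most j in x whose coefficient of x^j equals (−1)^j·(j+1). -/

import Mathlib

noncomputable section

/-- The truncated product expansion `F_N` of `−φ_{−2,1}(τ,z)/x` in `ℚ[x]⟦q⟧`:
`F_N = ∏_{m=1}^{N} (1 + (x−2)q^m + q^{2m})² · ∏_{m=1}^{N} (1 − q^m)^{−4}`. -/
def F (N : ℕ) : PowerSeries (Polynomial ℚ) :=
  (∏ m ∈ Finset.Icc 1 N,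
      (1 + PowerSeries.C (Polynomial.X - 2 : Polynomial ℚ) * PowerSeries.X ^ m
         + PowerSeries.X ^ (2 * m)) ^ 2) *
  Ring.inverse (∏ m ∈ Finset.Icc 1 N, (1 - PowerSeries.X ^ m) ^ 4)

/-!
In `R[x]⟦q⟧`, the series whose `q^n`-coefficient has `x`-degree at most `n` form a subring, and
on it the diagonal part `∑ₙ [x^n q^n] f · q^n` is a ring homomorphism to `R⟦q⟧`: in a product,
the top-degree coefficient of each `q^n`-coefficient only sees the top-degree coefficients of the
factors. This homomorphism reflects units, since the constant term of a series in the subring is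
a constant polynomial. All factors of `F_N` lie in the subring; the diagonal part kills `q`
and sends `(x - 2) q` to `q`, so it sends `F_N` to `(1 + q)²`. Hence `F_N⁻¹` lies in the
subring, with diagonal part `(1 + q)⁻² = ∑ₙ (-1)ⁿ (n + 1) qⁿ`.
-/

open PowerSeries
open scoped Polynomial

namespace PowerSeries

variable {R : Type*} [CommRing R]

variable (R) in
def diagSubring : Subring R[X]⟦X⟧ where
  carrier := {f | ∀ n, (coeff n f).natDegree ≤ n}
  one_mem' n := by rw [coeff_one]; split_ifs <;> simp
  mul_mem' {f g} hf hg n := by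
    rw [coeff_mul]
    refine Polynomial.natDegree_sum_le_of_forall_le _ _ fun p hp => ?_
    rw [← Finset.HasAntidiagonal.mem_antidiagonal.mp hp]
    exact Polynomial.natDegree_mul_le.trans (add_le_add (hf _) (hg _))
  zero_mem' n := by simp
  add_mem' {f g} hf hg n := by
    rw [map_add]
    exact (Polynomial.natDegree_add_le _ _).trans (max_le (hf n) (hg n))
  neg_mem' {f} hf n := by rw [map_neg, Polynomial.natDegree_neg]; exact hf n

variable (R) in
def diagHom : diagSubring R →+* R⟦X⟧ where
  toFun f := mk fun n => (coeff n (f : R[X]⟦X⟧)).coeff n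
  map_one' := by
    ext n
    rw [coeff_mk, Subring.coe_one, coeff_one, coeff_one]
    split_ifs with h <;> simp [h]
  map_mul' f g := by
    ext n
    simp only [coeff_mk, Subring.coe_mul, coeff_mul, Polynomial.finsetSum_coeff]
    refine Finset.sum_congr rfl fun p hp => ?_
    rw [← Finset.HasAntidiagonal.mem_antidiagonal.mp hp]
    exact Polynomial.coeff_mul_add_eq_of_natDegree_le (f.2 _) (g.2 _)
  map_zero' := by ext; simp
  map_add' f g := by ext; simp

theorem coeff_diagHom (f : diagSubring R) (n : ℕ) :
    coeff n (diagHom R f) = (coeff n (f : R[X]⟦X⟧)).coeff n := by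
  simp [diagHom]

theorem constantCoeff_coe_diagSubring (f : diagSubring R) :
    constantCoeff (f : R[X]⟦X⟧) = Polynomial.C (constantCoeff (diagHom R f)) := by
  rw [← coeff_zero_eq_constantCoeff_apply, ← coeff_zero_eq_constantCoeff_apply, coeff_diagHom]
  exact Polynomial.eq_C_of_natDegree_le_zero (f.2 0)

instance : IsLocalHom (diagHom R) where
  map_nonunit f hf := by
    obtain ⟨c, hc⟩ := isUnit_iff_constantCoeff.mp hf
    set u : R[X]ˣ := Units.map (Polynomial.C : R →+* R[X]).toMonoidHom c
    have hu : constantCoeff (f : R[X]⟦X⟧) = u := by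
      rw [constantCoeff_coe_diagSubring, ← hc]; rfl
    have hg : invOfUnit (f : R[X]⟦X⟧) u ∈ diagSubring R := fun n => by
      induction n using Nat.strong_induction_on with | _ n ih =>
      rw [coeff_invOfUnit]
      split_ifs with hn
      · exact (Polynomial.natDegree_C _).le.trans (Nat.zero_le n)
      rw [show -((u⁻¹ : R[X]ˣ) : R[X]) = Polynomial.C (-↑c⁻¹) by simp [u]]
      refine (Polynomial.natDegree_C_mul_le _ _).trans ?_
      refine Polynomial.natDegree_sum_le_of_forall_le _ _ fun p hp => ?_
      split_ifs with hpn
      · rw [← Finset.HasAntidiagonal.mem_antidiagonal.mp hp]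
        exact Polynomial.natDegree_mul_le.trans (add_le_add (f.2 _) (ih _ hpn))
      · simp
    exact .of_mul_eq_one ⟨_, hg⟩ (Subtype.ext (mul_invOfUnit _ _ hu))

theorem X_mem_diagSubring : (X : R[X]⟦X⟧) ∈ diagSubring R := fun n => by
  rw [coeff_X]; split_ifs <;> simp

theorem diagHom_X : diagHom R ⟨X, X_mem_diagSubring⟩ = 0 := by
  ext n
  rw [coeff_diagHom, coeff_X]
  split_ifs with h <;> simp [h, Polynomial.coeff_one]

theorem C_mul_X_mem_diagSubring {p : R[X]} (hp : p.natDegree ≤ 1) :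
    C p * X ∈ diagSubring R := fun n => by
  rw [coeff_C_mul, coeff_X]; split_ifs with h <;> simp [h, hp]

theorem diagHom_C_mul_X {p : R[X]} (hp : p.natDegree ≤ 1) :
    diagHom R ⟨C p * X, C_mul_X_mem_diagSubring hp⟩ = C (p.coeff 1) * X := by
  ext n
  rw [coeff_diagHom, coeff_C_mul, coeff_C_mul, coeff_X, coeff_X]
  split_ifs with h <;> simp [h]

theorem mk_neg_one_pow_mul_one_add_X_sq :
    (mk fun n => (-1) ^ n * (n + 1) : R⟦X⟧) * (1 + X) ^ 2 = 1 := by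
  have h := congrArg (rescale (-1 : R)) (mk_add_choose_mul_one_sub_pow_eq_one (S := R) 1)
  rw [map_mul, map_pow, map_sub, map_one, rescale_neg_one_X, sub_neg_eq_add] at h
  convert h using 2
  ext n
  simp [coeff_rescale, add_comm]

theorem ringInverse_one_add_X_sq :
    Ring.inverse ((1 + X) ^ 2 : R⟦X⟧) = mk fun n => (-1 : R) ^ n * (n + 1) := by
  have h := Ring.inverse_mul_cancel_left ((1 + X) ^ 2 : R⟦X⟧) (mk fun n => (-1) ^ n * (n + 1))
    (.of_mul_eq_one_right _ mk_neg_one_pow_mul_one_add_X_sq)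
  rwa [mul_comm _ (mk _), mk_neg_one_pow_mul_one_add_X_sq, mul_one] at h

end PowerSeries

theorem map_ringInverse {M₀ N₀ F : Type*} [MonoidWithZero M₀] [MonoidWithZero N₀]
    [FunLike F M₀ N₀] [MonoidHomClass F M₀ N₀] (f : F) {a : M₀} (ha : IsUnit a) :
    f (Ring.inverse a) = Ring.inverse (f a) := by
  obtain ⟨u, rfl⟩ := ha
  rw [Ring.inverse_unit]
  exact (Ring.inverse_unit (Units.map (f : M₀ →* N₀) u)).symm

theorem exists_diagSubring_eq_F {N : ℕ} (hN : 1 ≤ N) :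
    ∃ Φ : diagSubring ℚ, (Φ : ℚ[X]⟦X⟧) = F N ∧ diagHom ℚ Φ = (1 + X) ^ 2 := by
  have hdeg : (Polynomial.X - 2 : ℚ[X]).natDegree ≤ 1 := by
    rw [← Polynomial.C_ofNat, Polynomial.natDegree_X_sub_C]
  set q : diagSubring ℚ := ⟨X, X_mem_diagSubring⟩
  set y : diagSubring ℚ := ⟨C (Polynomial.X - 2) * X, C_mul_X_mem_diagSubring hdeg⟩
  have hq : diagHom ℚ q = 0 := diagHom_X
  have hy : diagHom ℚ y = X := by
    rw [diagHom_C_mul_X hdeg, ← Polynomial.C_ofNat, Polynomial.coeff_sub, Polynomial.coeff_X_one,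
      Polynomial.coeff_C_of_ne_zero one_ne_zero, sub_zero, map_one, one_mul]
  set B := ∏ m ∈ Finset.Icc 1 N, (1 - q ^ m) ^ 4
  have hB : diagHom ℚ B = 1 := by
    rw [map_prod]
    refine Finset.prod_eq_one fun m hm => ?_
    rw [map_pow, map_sub, map_one, map_pow, hq, zero_pow (by grind), sub_zero, one_pow]
  have hBu : IsUnit B := (isUnit_map_iff (diagHom ℚ) B).mp (hB ▸ isUnit_one)
  refine ⟨(∏ m ∈ Finset.Icc 1 N, (1 + y * q ^ (m - 1) + q ^ (2 * m)) ^ 2) * Ring.inverse B, ?_, ?_⟩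
  · rw [Subring.coe_mul, ← Subring.coe_subtype, map_ringInverse (diagSubring ℚ).subtype hBu, F]
    have hq' : (diagSubring ℚ).subtype q = X := rfl
    have hy' : (diagSubring ℚ).subtype y = C (Polynomial.X - 2) * X := rfl
    simp only [B, map_prod, map_pow, map_add, map_mul, map_one, map_sub, hq', hy']
    refine congrArg₂ (· * ·) (Finset.prod_congr rfl fun m hm => ?_) rfl
    rw [mul_assoc, ← pow_succ', Nat.sub_add_cancel (Finset.mem_Icc.mp hm).1]
  · rw [map_mul, map_ringInverse _ hBu, hB, Ring.inverse_one, mul_one, map_prod,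
      Finset.prod_eq_single_of_mem 1 (Finset.mem_Icc.mpr ⟨le_rfl, hN⟩)]
    · simp [hy, hq]
    · intro m hm hm1
      rw [map_pow, map_add, map_add, map_mul, map_pow, map_pow, hq, zero_pow (by grind),
        zero_pow (by grind)]
      simp

/-- `F_N` has constant term `1` (hence is invertible in `ℚ[x]⟦q⟧`), and for every `j ≥ 0`
and every `N ≥ j`, the coefficient of `q^j` in `F_N⁻¹` is a polynomial of degree at most `j`
in `x` whose coefficient of `x^j` equals `(−1)^j·(j+1)`. -/
theorem coeff_inv_F (N : ℕ) (hN : 1 ≤ N) :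
    (PowerSeries.constantCoeff (F N) = 1 ∧ IsUnit (F N)) ∧
    ∀ j : ℕ, j ≤ N →
      (PowerSeries.coeff j (Ring.inverse (F N))).degree ≤ (j : WithBot ℕ) ∧
      (PowerSeries.coeff j (Ring.inverse (F N))).coeff j =
        (-1 : ℚ) ^ j * (j + 1) := by
  obtain ⟨Φ, hF, hΦ⟩ := exists_diagSubring_eq_F hN
  have hΦu : IsUnit Φ := (isUnit_map_iff (diagHom ℚ) Φ).mp
    (hΦ ▸ .of_mul_eq_one_right _ mk_neg_one_pow_mul_one_add_X_sq)
  have hinv : Ring.inverse (Φ : ℚ[X]⟦X⟧) = ↑(Ring.inverse Φ) :=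
    (map_ringInverse (diagSubring ℚ).subtype hΦu).symm
  rw [← hF, hinv]
  refine ⟨⟨?_, hΦu.map (diagSubring ℚ).subtype⟩, fun j _ => ⟨?_, ?_⟩⟩
  · simp [constantCoeff_coe_diagSubring, hΦ]
  · exact Polynomial.natDegree_le_iff_degree_le.mp ((Ring.inverse Φ).2 j)
  · rw [← coeff_diagHom, map_ringInverse _ hΦu, hΦ, ringInverse_one_add_X_sq, coeff_mk]

end
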